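/- arXiv:1810.03589 — 2 statements merged into one kernel-verified Lean document; each statement's English description precedes it below -/
import Mathlib

section
/- With J₀, J compatible complex structures on (ℝ^{2n}, Ω) as above, define A = (½(Id + (−J₀J)))^{-1} and Π = A·P₀^{(1,0)}, where P₀^{(1,0)} = ½(Id − iJ₀) is the projection of ℂ^{2n} onto the +i-eigenspace V₀^{(1,0)} of J₀. Then Π is the projection operator of ℂ^{2n} onto V_J^{(1,0)} (the +i-eigenspace of J) with kernel V₀^{(0,1)} (the −i-eigenspace of J₀); in particular ℂ^{2n} = V_J^{(1,0)} ⊕ V₀^{(0,1)}. -/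
open Matrix MeasureTheory

noncomputable section

/-- Standard complex structure on ℝ^{2n}: J₀ e_{2k} = e_{2k+1}, J₀ e_{2k+1} = -e_{2k}. -/
def J0 (n : ℕ) : Matrix (Fin (2*n)) (Fin (2*n)) ℝ :=
  Matrix.of fun i j =>
    if (i : ℕ) = (j : ℕ) + 1 ∧ (j : ℕ) % 2 = 0 then 1
    else if (j : ℕ) = (i : ℕ) + 1 ∧ (i : ℕ) % 2 = 0 then -1 else 0

/-- Standard symplectic form Ω(u,v) = ⟨J₀ u, v⟩. -/
def Omega (n : ℕ) (u v : Fin (2*n) → ℝ) : ℝ := (J0 n *ᵥ u) ⬝ᵥ v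

/-- A complex structure J compatible with Ω: J² = -Id, Ω is J-invariant,
and ⟨·,·⟩_J := Ω(·, J·) is positive definite. -/
def Compatible (n : ℕ) (J : Matrix (Fin (2*n)) (Fin (2*n)) ℝ) : Prop :=
  J * J = -1 ∧ (∀ u v, Omega n (J *ᵥ u) (J *ᵥ v) = Omega n u v) ∧
    ∀ v : Fin (2*n) → ℝ, v ≠ 0 → 0 < Omega n v (J *ᵥ v)

/-- Complexification of a real matrix. -/
def mc {m : ℕ} (M : Matrix (Fin m) (Fin m) ℝ) : Matrix (Fin m) (Fin m) ℂ :=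
  M.map (fun x => (x : ℂ))

/-- Complexification of a real vector. -/
def vc {m : ℕ} (v : Fin m → ℝ) : Fin m → ℂ := fun i => (v i : ℂ)

/-- Projection P^{(1,0)} = ½(Id - iK) onto the +i eigenspace of K. -/
def P10 {n : ℕ} (K : Matrix (Fin (2*n)) (Fin (2*n)) ℝ) : Matrix (Fin (2*n)) (Fin (2*n)) ℂ :=
  (1/2 : ℂ) • (1 - Complex.I • mc K)

/-- Projection P^{(0,1)} = ½(Id + iK) onto the -i eigenspace of K. -/
def P01 {n : ℕ} (K : Matrix (Fin (2*n)) (Fin (2*n)) ℝ) : Matrix (Fin (2*n)) (Fin (2*n)) ℂ :=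
  (1/2 : ℂ) • (1 + Complex.I • mc K)

/-- `Amat n K J = (½(Id + (-K)·J))⁻¹`; so `Amat n (J0 n) J` is A_t^0 and
`Amat n J (J0 n)` is A_0^t. -/
def Amat (n : ℕ) (K J : Matrix (Fin (2*n)) (Fin (2*n)) ℝ) : Matrix (Fin (2*n)) (Fin (2*n)) ℝ :=
  ((1/2 : ℝ) • (1 + (-K) * J))⁻¹

/-- Π_t^0 = A_t^0 · P₀^{(1,0)}, the projection onto V_t^{(1,0)} with kernel V₀^{(0,1)}. -/
def PiT0 (n : ℕ) (J : Matrix (Fin (2*n)) (Fin (2*n)) ℝ) : Matrix (Fin (2*n)) (Fin (2*n)) ℂ :=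
  mc (Amat n (J0 n) J) * P10 (J0 n)

/-- Π_0^t = A_0^t · P_t^{(1,0)}, the projection onto V₀^{(1,0)} with kernel V_t^{(0,1)}. -/
def Pi0T (n : ℕ) (J : Matrix (Fin (2*n)) (Fin (2*n)) ℝ) : Matrix (Fin (2*n)) (Fin (2*n)) ℂ :=
  mc (Amat n J (J0 n)) * P10 J

/-- Model Bergman kernel 𝒫_J(Z,Z') = exp(-(π/2)⟨(-J₀J)(Z-Z'),Z-Z'⟩ - πiΩ(Z,Z')). -/
def Pker (n : ℕ) (J : Matrix (Fin (2*n)) (Fin (2*n)) ℝ) (Z Z' : Fin (2*n) → ℝ) : ℂ :=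
  Complex.exp (-(Real.pi : ℂ)/2 * Complex.ofReal ((((-(J0 n)) * J) *ᵥ (Z - Z')) ⬝ᵥ (Z - Z'))
    - (Real.pi : ℂ) * Complex.I * Complex.ofReal (Omega n Z Z'))

/-- Closed formula for the composed kernel (𝒫_t𝒫_0)(Z,Z'). -/
def PtP0form (n : ℕ) (J : Matrix (Fin (2*n)) (Fin (2*n)) ℝ) (Z Z' : Fin (2*n) → ℝ) : ℂ :=
  Complex.ofReal (Real.sqrt (Amat n (J0 n) J).det) *
    Complex.exp (-(Real.pi : ℂ) *
      ((Pi0T n J *ᵥ (vc Z - vc Z')) ⬝ᵥ (vc Z - vc Z')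
        + Complex.I * Complex.ofReal (Omega n Z Z')))

/-! With `B = ½(1 - J₀J)` and `P_K = ½(1 - iK)`, the relations `J₀² = J² = -1` give
`P_{J₀} B = B P_J` (both are `¼(1 - J₀J - iJ₀ - iJ)`) and `P_{J₀} P_J = B P_J`. Hence
`Π = B⁻¹ P_{J₀} = P_J B⁻¹`, so `Π` maps into `V_J^{(1,0)}`, and `P_{J₀} Π = P_{J₀}`, so `1 - Π` maps
into `ker P_{J₀} = V₀^{(0,1)}`. On `V_J^{(1,0)}` the matrix `B` agrees with `P_{J₀}`, so `Π` fixes it,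
while `Π` kills `ker P_{J₀}`. Finally `B` is invertible because `⟨Bv, v⟩ = ½(|v|² + Ω(v, Jv)) > 0`. -/

open Complex

section ComplexStructures

variable {R : Type*} [Ring R] [Algebra ℂ R] {X Y A : R}

def proj10 (X : R) : R := (1/2 : ℂ) • (1 - I • X)

def halfOneSubMul (X Y : R) : R := (1/2 : ℂ) • (1 - X * Y)

lemma mul_proj10_self (hX : X * X = -1) : X * proj10 X = I • proj10 X := by
  simp only [proj10, mul_smul_comm, mul_sub, mul_one, hX, smul_sub, smul_neg, smul_smul]
  match_scalars <;> ring_nf; norm_num [I_sq]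

lemma proj10_mul_halfOneSubMul (hX : X * X = -1) (hY : Y * Y = -1) :
    proj10 X * halfOneSubMul X Y = halfOneSubMul X Y * proj10 Y := by
  have hXXY : X * (X * Y) = -Y := by rw [← mul_assoc, hX, neg_one_mul]
  have hXYY : X * Y * Y = -X := by rw [mul_assoc, hY, mul_neg_one]
  simp only [proj10, halfOneSubMul, sub_mul, mul_sub, one_mul, mul_one,
    smul_mul_assoc, mul_smul_comm, hXXY, hXYY]
  module

lemma proj10_mul_proj10 (hY : Y * Y = -1) :
    proj10 X * proj10 Y = halfOneSubMul X Y * proj10 Y := by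
  have hXYY : X * Y * Y = -X := by rw [mul_assoc, hY, mul_neg_one]
  simp only [proj10, halfOneSubMul, sub_mul, mul_sub, one_mul, mul_one,
    smul_mul_assoc, mul_smul_comm, hXYY, smul_smul]
  match_scalars <;> ring_nf; norm_num [I_sq]

lemma mul_proj10_eq_proj10_mul (hX : X * X = -1) (hY : Y * Y = -1)
    (hAB : A * halfOneSubMul X Y = 1) (hBA : halfOneSubMul X Y * A = 1) :
    A * proj10 X = proj10 Y * A :=
  calc A * proj10 X = A * (proj10 X * halfOneSubMul X Y) * A := by
        rw [mul_assoc, mul_assoc, hBA, mul_one]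
    _ = proj10 Y * A := by
        rw [proj10_mul_halfOneSubMul hX hY, ← mul_assoc, hAB, one_mul]

lemma proj10_mul_mul_proj10 (hX : X * X = -1) (hY : Y * Y = -1)
    (hAB : A * halfOneSubMul X Y = 1) (hBA : halfOneSubMul X Y * A = 1) :
    proj10 X * (A * proj10 X) = proj10 X := by
  rw [mul_proj10_eq_proj10_mul hX hY hAB hBA, ← mul_assoc, proj10_mul_proj10 hY, mul_assoc,
    ← mul_proj10_eq_proj10_mul hX hY hAB hBA, ← mul_assoc, hBA, one_mul]

end ComplexStructures

section MatrixComplexStructures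

variable {m : Type*} [Fintype m] [DecidableEq m] {X Y A : Matrix m m ℂ} {v : m → ℂ}

lemma proj10_mulVec_eq_zero_iff (hX : X * X = -1) :
    proj10 X *ᵥ v = 0 ↔ X *ᵥ v = -I • v := by
  have hXXv : X *ᵥ (X *ᵥ v) = -v := by rw [mulVec_mulVec, hX, neg_mulVec, one_mulVec]
  rw [proj10, smul_mulVec, smul_eq_zero, sub_mulVec, one_mulVec, smul_mulVec, sub_eq_zero]
  simp only [one_div, inv_eq_zero, two_ne_zero, false_or]
  constructor
  · intro h
    conv_lhs => rw [h]
    rw [mulVec_smul, hXXv, smul_neg, neg_smul]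
  · intro h
    rw [h, smul_smul, mul_neg, I_mul_I, neg_neg, one_smul]

lemma halfOneSubMul_mulVec_eq_proj10_mulVec (hv : Y *ᵥ v = I • v) :
    halfOneSubMul X Y *ᵥ v = proj10 X *ᵥ v := by
  rw [halfOneSubMul, proj10, smul_mulVec, smul_mulVec, sub_mulVec, sub_mulVec, ← mulVec_mulVec,
    hv, mulVec_smul, smul_mulVec]

lemma mulVec_mul_proj10_mulVec_eq_I_smul (hX : X * X = -1) (hY : Y * Y = -1)
    (hA : A * halfOneSubMul X Y = 1) (v : m → ℂ) :
    Y *ᵥ ((A * proj10 X) *ᵥ v) = I • ((A * proj10 X) *ᵥ v) := by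
  rw [mul_proj10_eq_proj10_mul hX hY hA (mul_eq_one_comm.mp hA), mulVec_mulVec, ← mul_assoc,
    mul_proj10_self hY, smul_mul_assoc, smul_mulVec]

lemma mul_proj10_mulVec_of_mulVec_eq_I_smul (hA : A * halfOneSubMul X Y = 1)
    (hv : Y *ᵥ v = I • v) : (A * proj10 X) *ᵥ v = v := by
  rw [← mulVec_mulVec, ← halfOneSubMul_mulVec_eq_proj10_mulVec hv, mulVec_mulVec, hA, one_mulVec]

lemma mul_proj10_mulVec_of_mulVec_eq_neg_I_smul (hX : X * X = -1) (hv : X *ᵥ v = -I • v) :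
    (A * proj10 X) *ᵥ v = 0 := by
  rw [← mulVec_mulVec, (proj10_mulVec_eq_zero_iff hX).mpr hv, mulVec_zero]

lemma mulVec_sub_mul_proj10_mulVec_eq_neg_I_smul (hX : X * X = -1) (hY : Y * Y = -1)
    (hA : A * halfOneSubMul X Y = 1) (v : m → ℂ) :
    X *ᵥ (v - (A * proj10 X) *ᵥ v) = -I • (v - (A * proj10 X) *ᵥ v) := by
  rw [← proj10_mulVec_eq_zero_iff hX, mulVec_sub, mulVec_mulVec,
    proj10_mul_mul_proj10 hX hY hA (mul_eq_one_comm.mp hA), sub_self]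

lemma eq_zero_of_mulVec_eq_I_smul_of_mulVec_eq_neg_I_smul (hX : X * X = -1)
    (hA : A * halfOneSubMul X Y = 1) (hYv : Y *ᵥ v = I • v) (hXv : X *ᵥ v = -I • v) : v = 0 :=
  (mul_proj10_mulVec_of_mulVec_eq_I_smul hA hYv).symm.trans
    (mul_proj10_mulVec_of_mulVec_eq_neg_I_smul hX hXv)

end MatrixComplexStructures

section Complexification

variable {m : ℕ}

lemma mc_eq_mapMatrix (M : Matrix (Fin m) (Fin m) ℝ) : mc M = ofRealHom.mapMatrix M := rfl

lemma mc_mul (M N : Matrix (Fin m) (Fin m) ℝ) : mc (M * N) = mc M * mc N := by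
  simp only [mc_eq_mapMatrix, map_mul]

lemma mc_neg_one : mc (-1 : Matrix (Fin m) (Fin m) ℝ) = -1 := by
  simp only [mc_eq_mapMatrix, map_neg, map_one]

lemma mc_mul_self_eq_neg_one {M : Matrix (Fin m) (Fin m) ℝ} (hM : M * M = -1) :
    mc M * mc M = -1 := by
  rw [← mc_mul, hM, mc_neg_one]

lemma mc_smul (r : ℝ) (M : Matrix (Fin m) (Fin m) ℝ) : mc (r • M) = (r : ℂ) • mc M := by
  ext i j
  simp [mc]

lemma mc_half_one_add_neg_mul (K J : Matrix (Fin m) (Fin m) ℝ) :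
    mc ((1/2 : ℝ) • (1 + (-K) * J)) = halfOneSubMul (mc K) (mc J) := by
  rw [mc_smul, halfOneSubMul, mc_eq_mapMatrix, mc_eq_mapMatrix, mc_eq_mapMatrix, map_add, map_one,
    map_mul, map_neg, neg_mul, ← sub_eq_add_neg]
  push_cast
  rfl

end Complexification

lemma J0_transpose (n : ℕ) : (J0 n)ᵀ = -J0 n := by
  ext i j
  simp only [transpose_apply, Matrix.neg_apply, J0, of_apply]
  split_ifs <;> first | omega | norm_num

lemma J0_mul_self (n : ℕ) : J0 n * J0 n = -1 := by
  ext i j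
  have hi := i.isLt
  -- the only nonzero entry of row `i` of `J0` sits in column `p`
  let p : Fin (2*n) := ⟨if (i : ℕ) % 2 = 0 then i + 1 else i - 1, by split_ifs <;> omega⟩
  rw [mul_apply, Finset.sum_eq_single p]
  · simp only [J0, p, of_apply, Matrix.neg_apply, Matrix.one_apply, Fin.ext_iff]
    split_ifs <;> first | omega | norm_num
  · intro k _ hk
    have hkp : (k : ℕ) ≠ p := fun h => hk (Fin.ext h)
    simp only [J0, p, of_apply] at hkp ⊢
    split_ifs at hkp ⊢ <;> first | omega | norm_num
  · simp

lemma det_ne_zero_of_forall_mulVec_dotProduct_pos {m : Type*} [Fintype m] [DecidableEq m]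
    {M : Matrix m m ℝ} (hM : ∀ v ≠ 0, 0 < (M *ᵥ v) ⬝ᵥ v) : M.det ≠ 0 := by
  intro hdet
  obtain ⟨v, hv, hMv⟩ := exists_mulVec_eq_zero_iff.mpr hdet
  simpa [hMv] using hM v hv

lemma neg_J0_mul_mulVec_dotProduct (n : ℕ) (J : Matrix (Fin (2*n)) (Fin (2*n)) ℝ)
    (v : Fin (2*n) → ℝ) : (((-J0 n) * J) *ᵥ v) ⬝ᵥ v = Omega n v (J *ᵥ v) := by
  rw [Omega, neg_mul, neg_mulVec, ← mulVec_mulVec, neg_dotProduct, dotProduct_comm,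
    dotProduct_mulVec, ← mulVec_transpose, J0_transpose, neg_mulVec, neg_dotProduct, neg_neg]

lemma Compatible.isUnit_det_half_one_add_neg_J0_mul {n : ℕ} {J : Matrix (Fin (2*n)) (Fin (2*n)) ℝ}
    (hJ : Compatible n J) : IsUnit ((1/2 : ℝ) • (1 + (-J0 n) * J)).det := by
  refine isUnit_iff_ne_zero.mpr (det_ne_zero_of_forall_mulVec_dotProduct_pos fun v hv => ?_)
  rw [smul_mulVec, add_mulVec, one_mulVec, smul_dotProduct, add_dotProduct,
    neg_J0_mul_mulVec_dotProduct, smul_eq_mul]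
  have hΩ := hJ.2.2 v hv
  have hvv : 0 ≤ v ⬝ᵥ v := Finset.sum_nonneg fun i _ => mul_self_nonneg (v i)
  positivity

/-- Π = A·P₀^{(1,0)} is the projection of ℂ^{2n} onto V_J^{(1,0)}
with kernel V₀^{(0,1)}; in particular ℂ^{2n} = V_J^{(1,0)} ⊕ V₀^{(0,1)}. -/
theorem stmt1 (n : ℕ) (J : Matrix (Fin (2*n)) (Fin (2*n)) ℝ) (hJ : Compatible n J) :
    (∀ v : Fin (2*n) → ℂ, mc J *ᵥ (PiT0 n J *ᵥ v) = Complex.I • (PiT0 n J *ᵥ v)) ∧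
    (∀ v : Fin (2*n) → ℂ, mc J *ᵥ v = Complex.I • v → PiT0 n J *ᵥ v = v) ∧
    (∀ v : Fin (2*n) → ℂ, mc (J0 n) *ᵥ v = (-Complex.I) • v → PiT0 n J *ᵥ v = 0) ∧
    (∀ v : Fin (2*n) → ℂ,
      mc (J0 n) *ᵥ (v - PiT0 n J *ᵥ v) = (-Complex.I) • (v - PiT0 n J *ᵥ v)) ∧
    (∀ v : Fin (2*n) → ℂ,
      mc J *ᵥ v = Complex.I • v → mc (J0 n) *ᵥ v = (-Complex.I) • v → v = 0) := by
  have hX := mc_mul_self_eq_neg_one (J0_mul_self n)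
  have hY := mc_mul_self_eq_neg_one hJ.1
  have hA : mc (Amat n (J0 n) J) * halfOneSubMul (mc (J0 n)) (mc J) = 1 := by
    rw [← mc_half_one_add_neg_mul, ← mc_mul, Amat,
      nonsing_inv_mul _ hJ.isUnit_det_half_one_add_neg_J0_mul, mc_eq_mapMatrix, map_one]
  rw [show PiT0 n J = mc (Amat n (J0 n) J) * proj10 (mc (J0 n)) from rfl]
  exact ⟨mulVec_mul_proj10_mulVec_eq_I_smul hX hY hA,
    fun _ => mul_proj10_mulVec_of_mulVec_eq_I_smul hA,
    fun _ => mul_proj10_mulVec_of_mulVec_eq_neg_I_smul hX,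
    mulVec_sub_mul_proj10_mulVec_eq_neg_I_smul hX hY hA,
    fun _ => eq_zero_of_mulVec_eq_I_smul_of_mulVec_eq_neg_I_smul hX hA⟩

end
end

section
/- Let S ∈ End(ℂ^m) be symmetric (Sᵀ = S for the bilinear form) with positive definite real part Re S. Then the Gaussian integral ∫_{ℝ^m} exp(−π⟨SZ,Z⟩) dZ converges and equals det(S)^{-1/2}, where det(S)^{1/2} is defined by analytic continuation of the positive square root along the path t ↦ Re S + t·i·Im S, t ∈ [0,1], of matrices all of which are invertible. -/
/-!
A real congruence `Q` with `Qᵀ (Re S) Q = 1` and `Qᵀ (Im S) Q` diagonal turns the integrand, after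
the substitution `Z = Q x`, into a product of one-dimensional Gaussians `exp (-π (1 + i dⱼ) xⱼ²)`.
Hence the integral `I(S)` converges and `I(S)² det S = 1`. Along `S_t = Re S + t i Im S` the map
`t ↦ I(S_t)⁻¹` is therefore a square root of `det S_t`; it is continuous by dominated convergence
(`|exp (-π ⟨S_t Z, Z⟩)|` does not depend on `t`) and equals `√(det Re S)` at `t = 0`, so it is the
continuation `σ` on all of `[0, 1]`.
-/

open Matrix MeasureTheory

noncomputable section

namespace Matrix

variable {n : Type*} [Fintype n] [DecidableEq n]

lemma IsHermitian.transpose_eigenvectorUnitary_mul_mul {B : Matrix n n ℝ} (hB : B.IsHermitian) :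
    (hB.eigenvectorUnitary : Matrix n n ℝ)ᵀ * B * hB.eigenvectorUnitary =
      diagonal hB.eigenvalues := by
  simpa [Unitary.conjStarAlgAut_star_apply, star_eq_conjTranspose] using
    hB.conjStarAlgAut_star_eigenvectorUnitary

lemma IsHermitian.transpose_eigenvectorUnitary_mul_self {B : Matrix n n ℝ} (hB : B.IsHermitian) :
    (hB.eigenvectorUnitary : Matrix n n ℝ)ᵀ * hB.eigenvectorUnitary = 1 := by
  simpa [star_eq_conjTranspose] using Unitary.coe_star_mul_self hB.eigenvectorUnitary

lemma PosDef.exists_transpose_mul_mul_eq_one {A : Matrix n n ℝ} (hA : A.PosDef) :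
    ∃ P : Matrix n n ℝ, Pᵀ * A * P = 1 := by
  set U : Matrix n n ℝ := (hA.1.eigenvectorUnitary : Matrix n n ℝ)
  set D : Matrix n n ℝ := diagonal fun i => (√(hA.1.eigenvalues i))⁻¹
  refine ⟨U * D, ?_⟩
  have hdiag : Uᵀ * A * U = diagonal hA.1.eigenvalues :=
    hA.1.transpose_eigenvectorUnitary_mul_mul
  calc (U * D)ᵀ * A * (U * D) = D * (Uᵀ * A * U) * D := by
        simp [D, Matrix.mul_assoc]
    _ = 1 := by
        rw [hdiag, diagonal_mul_diagonal, diagonal_mul_diagonal, ← diagonal_one]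
        congr 1; ext i
        have hpos := hA.eigenvalues_pos i
        field_simp
        rw [Real.sq_sqrt hpos.le]

lemma PosDef.exists_transpose_mul_mul_eq_one_and_diagonal {A B : Matrix n n ℝ} (hA : A.PosDef)
    (hB : B.IsHermitian) :
    ∃ (Q : Matrix n n ℝ) (d : n → ℝ), Qᵀ * A * Q = 1 ∧ Qᵀ * B * Q = diagonal d := by
  obtain ⟨P, hP⟩ := hA.exists_transpose_mul_mul_eq_one
  have hC : (Pᵀ * B * P).IsHermitian := by
    simpa using isHermitian_conjTranspose_mul_mul P hB
  set V : Matrix n n ℝ := (hC.eigenvectorUnitary : Matrix n n ℝ)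
  refine ⟨P * V, hC.eigenvalues, ?_, ?_⟩
  · calc (P * V)ᵀ * A * (P * V) = Vᵀ * (Pᵀ * A * P) * V := by simp [Matrix.mul_assoc]
      _ = 1 := by rw [hP, Matrix.mul_one, hC.transpose_eigenvectorUnitary_mul_self]
  · calc (P * V)ᵀ * B * (P * V) = Vᵀ * (Pᵀ * B * P) * V := by simp [Matrix.mul_assoc]
      _ = _ := hC.transpose_eigenvectorUnitary_mul_mul

end Matrix

section ChangeOfVariables

variable {ι E : Type*} [Fintype ι] [DecidableEq ι] [NormedAddCommGroup E]

lemma measurableEmbedding_mulVec {Q : Matrix ι ι ℝ} (hQ : Q.det ≠ 0) :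
    MeasurableEmbedding (Q *ᵥ · : (ι → ℝ) → ι → ℝ) := by
  have : Invertible Q := Q.invertibleOfIsUnitDet (isUnit_iff_ne_zero.2 hQ)
  exact (Matrix.toLinearEquiv' Q this).toContinuousLinearEquiv.toHomeomorph.measurableEmbedding

lemma map_mulVec_volume {Q : Matrix ι ι ℝ} (hQ : Q.det ≠ 0) :
    (volume : Measure (ι → ℝ)).map (Q *ᵥ ·) = ENNReal.ofReal |Q.det⁻¹| • volume :=
  Real.map_matrix_volume_pi_eq_smul_volume_pi hQ

lemma integrable_comp_mulVec_iff {Q : Matrix ι ι ℝ} (hQ : Q.det ≠ 0) {f : (ι → ℝ) → E} :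
    Integrable (fun x => f (Q *ᵥ x)) ↔ Integrable f := by
  rw [← Function.comp_def, ← (measurableEmbedding_mulVec hQ).integrable_map_iff,
    map_mulVec_volume hQ]
  exact integrable_smul_measure (by simpa using hQ) ENNReal.ofReal_ne_top

lemma integral_comp_mulVec [NormedSpace ℝ E] {Q : Matrix ι ι ℝ} (hQ : Q.det ≠ 0)
    (f : (ι → ℝ) → E) : ∫ x, f (Q *ᵥ x) = |Q.det⁻¹| • ∫ x, f x := by
  rw [← (measurableEmbedding_mulVec hQ).integral_map, map_mulVec_volume hQ,
    integral_smul_measure, ENNReal.toReal_ofReal (abs_nonneg _)]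

end ChangeOfVariables

section ComplexGaussian

open Complex

variable {m : ℕ}

lemma transpose_mc_mul_mul (Q M : Matrix (Fin m) (Fin m) ℝ) :
    (mc Q)ᵀ * mc M * mc Q = mc (Qᵀ * M * Q) := by
  change _ = (Qᵀ * M * Q).map ofRealHom
  rw [Matrix.map_mul, Matrix.map_mul, Matrix.transpose_map]
  rfl

lemma det_mc (M : Matrix (Fin m) (Fin m) ℝ) : (mc M).det = M.det :=
  (RingHom.map_det ofRealHom M).symm

lemma mc_mulVec_vc (M : Matrix (Fin m) (Fin m) ℝ) (v : Fin m → ℝ) :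
    mc M *ᵥ vc v = vc (M *ᵥ v) := by
  ext i; simp [vc, mc, mulVec, dotProduct]

lemma re_mulVec_vc_dotProduct_vc (S : Matrix (Fin m) (Fin m) ℂ) (v : Fin m → ℝ) :
    ((S *ᵥ vc v) ⬝ᵥ vc v).re = (S.map re *ᵥ v) ⬝ᵥ v := by
  simp [vc, mulVec, dotProduct, Complex.re_sum]

lemma eq_mc_re_add_I_smul_mc_im (S : Matrix (Fin m) (Fin m) ℂ) :
    S = mc (S.map re) + I • mc (S.map im) := by
  ext i j; simp [mc, mul_comm I]

lemma exists_transpose_mul_mul_eq_diagonal {S : Matrix (Fin m) (Fin m) ℂ} (hsym : Sᵀ = S)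
    (hre : (S.map re).PosDef) :
    ∃ (Q : Matrix (Fin m) (Fin m) ℝ) (d : Fin m → ℝ), Q.det ≠ 0 ∧
      (mc Q)ᵀ * S * mc Q = diagonal fun j => 1 + I * d j := by
  have him : (S.map im).IsHermitian := by
    simp [IsSymm, ← transpose_map, hsym]
  obtain ⟨Q, d, hQA, hQB⟩ := hre.exists_transpose_mul_mul_eq_one_and_diagonal him
  refine ⟨Q, d, fun h => by simpa [h] using congrArg det hQA, ?_⟩
  conv_lhs => rw [eq_mc_re_add_I_smul_mc_im S]
  rw [Matrix.mul_add, Matrix.add_mul, Matrix.mul_smul, Matrix.smul_mul, transpose_mc_mul_mul,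
    transpose_mc_mul_mul, hQA, hQB]
  ext i j
  rcases eq_or_ne i j with rfl | h <;> simp [mc, diagonal, one_apply, *]

def complexGaussian (S : Matrix (Fin m) (Fin m) ℂ) (Z : Fin m → ℝ) : ℂ :=
  cexp (-(Real.pi : ℂ) * ((S *ᵥ vc Z) ⬝ᵥ vc Z))

lemma continuous_complexGaussian (S : Matrix (Fin m) (Fin m) ℂ) :
    Continuous (complexGaussian S) := by
  unfold complexGaussian vc
  fun_prop

lemma norm_complexGaussian (S : Matrix (Fin m) (Fin m) ℂ) (Z : Fin m → ℝ) :
    ‖complexGaussian S Z‖ = Real.exp (-Real.pi * ((S.map re *ᵥ Z) ⬝ᵥ Z)) := by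
  rw [complexGaussian, norm_exp, ← re_mulVec_vc_dotProduct_vc]
  simp

lemma complexGaussian_mulVec_eq_prod {S : Matrix (Fin m) (Fin m) ℂ}
    {Q : Matrix (Fin m) (Fin m) ℝ} {c : Fin m → ℂ} (hQ : (mc Q)ᵀ * S * mc Q = diagonal c)
    (x : Fin m → ℝ) :
    complexGaussian S (Q *ᵥ x) = ∏ j, cexp (-(Real.pi * c j) * (x j : ℂ) ^ 2) := by
  have hquad : (S *ᵥ vc (Q *ᵥ x)) ⬝ᵥ vc (Q *ᵥ x) = ∑ j, c j * (x j : ℂ) ^ 2 := by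
    rw [← mc_mulVec_vc, mulVec_mulVec, dotProduct_comm, dotProduct_mulVec, vecMul_mulVec,
      ← Matrix.mul_assoc, hQ]
    simp only [dotProduct, vecMul_diagonal, vc]
    exact Finset.sum_congr rfl fun j _ => by ring
  rw [complexGaussian, hquad, Finset.mul_sum, ← exp_sum]
  congr 1
  exact Finset.sum_congr rfl fun j _ => by ring

lemma integrable_complexGaussian_of_diagonal {S : Matrix (Fin m) (Fin m) ℂ}
    {Q : Matrix (Fin m) (Fin m) ℝ} {c : Fin m → ℂ} (hdet : Q.det ≠ 0)
    (hQ : (mc Q)ᵀ * S * mc Q = diagonal c) (hc : ∀ j, 0 < (c j).re) :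
    Integrable (complexGaussian S) := by
  rw [← integrable_comp_mulVec_iff hdet]
  simp_rw [complexGaussian_mulVec_eq_prod hQ]
  exact Integrable.fintype_prod fun j =>
    integrable_cexp_neg_mul_sq (by simpa using mul_pos Real.pi_pos (hc j))

lemma integral_complexGaussian_sq_of_diagonal {S : Matrix (Fin m) (Fin m) ℂ}
    {Q : Matrix (Fin m) (Fin m) ℝ} {c : Fin m → ℂ} (hdet : Q.det ≠ 0)
    (hQ : (mc Q)ᵀ * S * mc Q = diagonal c) (hc : ∀ j, 0 < (c j).re) :
    (∫ Z, complexGaussian S Z) ^ 2 = Q.det ^ 2 * ∏ j, (c j)⁻¹ := by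
  have hπ : (Real.pi : ℂ) ≠ 0 := ofReal_ne_zero.2 Real.pi_ne_zero
  have hprod : ∫ x, complexGaussian S (Q *ᵥ x) = ∏ j, (c j)⁻¹ ^ (2⁻¹ : ℂ) := by
    simp_rw [complexGaussian_mulVec_eq_prod hQ]
    refine (integral_fintype_prod_eq_prod (μ := fun _ => volume)
      fun j (x : ℝ) => cexp (-(Real.pi * c j) * (x : ℂ) ^ 2)).trans ?_
    refine Finset.prod_congr rfl fun j _ => ?_
    rw [integral_gaussian_complex (by simpa using mul_pos Real.pi_pos (hc j)),
      div_mul_cancel_left₀ hπ, one_div]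
  rw [integral_comp_mulVec hdet] at hprod
  have hI : ∫ Z, complexGaussian S Z = |Q.det| • ∏ j, (c j)⁻¹ ^ (2⁻¹ : ℂ) := by
    rw [← hprod, smul_smul, abs_inv, mul_inv_cancel₀ (abs_ne_zero.2 hdet), one_smul]
  rw [hI, smul_pow, ← Finset.prod_pow]
  simp [cpow_ofNat_inv_pow, sq_abs]

lemma integrable_complexGaussian {S : Matrix (Fin m) (Fin m) ℂ} (hsym : Sᵀ = S)
    (hre : (S.map re).PosDef) :
    Integrable (complexGaussian S) := by
  obtain ⟨Q, d, hdet, hQ⟩ := exists_transpose_mul_mul_eq_diagonal hsym hre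
  exact integrable_complexGaussian_of_diagonal hdet hQ fun j => by simp

lemma integral_complexGaussian_sq_mul_det {S : Matrix (Fin m) (Fin m) ℂ} (hsym : Sᵀ = S)
    (hre : (S.map re).PosDef) :
    (∫ Z, complexGaussian S Z) ^ 2 * S.det = 1 := by
  obtain ⟨Q, d, hdet, hQ⟩ := exists_transpose_mul_mul_eq_diagonal hsym hre
  have hdetS : (Q.det : ℂ) ^ 2 * S.det = ∏ j, (1 + I * d j) := by
    rw [← det_diagonal, ← hQ, det_mul, det_mul, det_transpose, det_mc]
    ring
  have hne : ∀ j, (1 : ℂ) + I * d j ≠ 0 := fun j h => by simpa using congrArg re h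
  rw [integral_complexGaussian_sq_of_diagonal hdet hQ fun j => by simp]
  calc (Q.det : ℂ) ^ 2 * (∏ j, (1 + I * d j)⁻¹) * S.det
      = (∏ j, (1 + I * d j))⁻¹ * ((Q.det : ℂ) ^ 2 * S.det) := by
        rw [Finset.prod_inv_distrib]; ring
    _ = 1 := by rw [hdetS, inv_mul_cancel₀ (Finset.prod_ne_zero_iff.2 fun j _ => hne j)]

lemma complexGaussian_mc (A : Matrix (Fin m) (Fin m) ℝ) (Z : Fin m → ℝ) :
    complexGaussian (mc A) Z = Real.exp (-Real.pi * ((A *ᵥ Z) ⬝ᵥ Z)) := by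
  simp [complexGaussian, mc_mulVec_vc, vc, dotProduct]

lemma integral_complexGaussian_mc {A : Matrix (Fin m) (Fin m) ℝ} (hA : A.PosDef) :
    ∫ Z, complexGaussian (mc A) Z = ((√A.det)⁻¹ : ℝ) := by
  have hsym : (mc A)ᵀ = mc A := by
    rw [mc, ← transpose_map, (isHermitian_iff_isSymm.1 hA.1).eq]
  have hre : (mc A).map re = A := by ext; simp [mc]
  set r := ∫ Z, Real.exp (-Real.pi * ((A *ᵥ Z) ⬝ᵥ Z))
  have hI : ∫ Z, complexGaussian (mc A) Z = r := by
    simp_rw [complexGaussian_mc]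
    exact integral_complex_ofReal
  have hr : 0 < r := integral_exp_pos <| by
    simpa only [norm_complexGaussian, hre] using (integrable_complexGaussian hsym (hre ▸ hA)).norm
  have hsq : r ^ 2 * A.det = 1 := by
    exact_mod_cast hI ▸ det_mc A ▸ integral_complexGaussian_sq_mul_det hsym (hre ▸ hA)
  rw [hI, show A.det = r⁻¹ ^ 2 by field_simp; linarith, Real.sqrt_sq (inv_nonneg.2 hr.le), inv_inv]

section ScaleIm

variable (S : Matrix (Fin m) (Fin m) ℂ)

def scaleIm (t : ℝ) : Matrix (Fin m) (Fin m) ℂ :=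
  mc (S.map re) + (t : ℂ) • (I • mc (S.map im))

lemma scaleIm_zero : scaleIm S 0 = mc (S.map re) := by
  simp [scaleIm]

lemma scaleIm_one : scaleIm S 1 = S := by
  rw [scaleIm, ofReal_one, one_smul, ← eq_mc_re_add_I_smul_mc_im]

lemma map_re_scaleIm (t : ℝ) : (scaleIm S t).map re = S.map re := by
  ext; simp [scaleIm, mc]

variable {S}

lemma transpose_scaleIm (hsym : Sᵀ = S) (t : ℝ) : (scaleIm S t)ᵀ = scaleIm S t := by
  simp [scaleIm, mc, ← transpose_map, hsym]

lemma continuous_integral_complexGaussian_scaleIm (hsym : Sᵀ = S) (hre : (S.map re).PosDef) :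
    Continuous fun t => ∫ Z, complexGaussian (scaleIm S t) Z := by
  refine continuous_of_dominated (bound := fun Z => ‖complexGaussian S Z‖)
    (fun t => (continuous_complexGaussian _).aestronglyMeasurable)
    (fun t => .of_forall fun Z => by
      rw [norm_complexGaussian, norm_complexGaussian, map_re_scaleIm])
    (integrable_complexGaussian hsym hre).norm (.of_forall fun Z => ?_)
  unfold complexGaussian scaleIm vc
  fun_prop

end ScaleIm

end ComplexGaussian

/-- complex Gaussian integral: for S symmetric with positive definite
real part, ∫_{ℝ^m} exp(-π⟨SZ,Z⟩)dZ converges and equals det(S)^{-1/2}, where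
det(S)^{1/2} is obtained by analytic continuation of the positive square root along
the path t ↦ Re S + t·i·Im S, encoded by a continuous square-root path σ. -/
theorem stmt17 (m : ℕ) (S : Matrix (Fin m) (Fin m) ℂ)
    (hsym : Sᵀ = S)
    (hpos : ∀ v : Fin m → ℝ, v ≠ 0 → 0 < ((S.map Complex.re) *ᵥ v) ⬝ᵥ v) :
    Integrable (fun Z : Fin m → ℝ =>
      Complex.exp (-(Real.pi : ℂ) * ((S *ᵥ vc Z) ⬝ᵥ vc Z))) ∧
    ∀ σ : ℝ → ℂ, ContinuousOn σ (Set.Icc 0 1) →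
      (∀ t ∈ Set.Icc (0:ℝ) 1,
        σ t ^ 2 = ((S.map Complex.re).map (fun x => (x : ℂ))
            + (t : ℂ) • (Complex.I • (S.map Complex.im).map (fun x => (x : ℂ)))).det) →
      σ 0 = Complex.ofReal (Real.sqrt ((S.map Complex.re).det)) →
      (∫ Z : Fin m → ℝ, Complex.exp (-(Real.pi : ℂ) * ((S *ᵥ vc Z) ⬝ᵥ vc Z)))
        = (σ 1)⁻¹ := by
  have hre : (S.map Complex.re).PosDef :=
    .of_dotProduct_mulVec_pos (by simp [IsSymm, ← transpose_map, hsym]) fun v hv => by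
      simpa [dotProduct_comm] using hpos v hv
  refine ⟨integrable_complexGaussian hsym hre, fun σ hσ hσ_sq hσ0 => ?_⟩
  have hsq (t : ℝ) := integral_complexGaussian_sq_mul_det (transpose_scaleIm hsym t)
    (map_re_scaleIm S t ▸ hre)
  have hne (t : ℝ) : ∫ Z, complexGaussian (scaleIm S t) Z ≠ 0 := fun h => by simpa [h] using hsq t
  set g : ℝ → ℂ := fun t => (∫ Z, complexGaussian (scaleIm S t) Z)⁻¹
  have hg : Continuous g := (continuous_integral_complexGaussian_scaleIm hsym hre).inv₀ hne
  have hg0 : σ 0 = g 0 := by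
    simp only [g, scaleIm_zero, integral_complexGaussian_mc hre, hσ0, Complex.ofReal_inv, inv_inv]
  have hσg := isPreconnected_Icc.eq_of_sq_eq hσ hg.continuousOn
    (fun t ht => by
      simp only [Pi.pow_apply, g, inv_pow, inv_eq_of_mul_eq_one_right (hsq t)]
      exact hσ_sq t ht)
    (fun {t} _ => inv_ne_zero (hne t)) (Set.left_mem_Icc.2 zero_le_one) hg0
    (Set.right_mem_Icc.2 zero_le_one)
  rw [hσg, inv_inv, scaleIm_one]
  rfl

end
end
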